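/- Let r_0(n) denote the number of binary partitions of n with an even number of parts equal to 1 (i.e., with 2 ∣ α_1), with r_0(0) = 1. Then for every integer n ≥ 2: if n ≡ 2 (mod 4), r_0(n) = r_0(n−2) + r_0((n−2)/2); and if n ≡ 0 (mod 4), r_0(n) = r_0(n−2) + r_0(n/2). Moreover r_0(n) = 0 for n odd. -/

import Mathlib

/-!
A binary partition of `n` has `α 0 ≡ n (mod 2)`, so `r0` vanishes at odd `n` and counts all
binary partitions at even `n`. Those of `2m + 2` either have at least two parts `1` (remove two of
them: binary partitions of `2m`) or none (halve every part: binary partitions of `m + 1`), and the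
binary partitions of an odd number are those of its predecessor with one extra part `1`.
-/

/-- The integer partitioned by the binary partition `α`, where `α i` is the
number of parts equal to `2 ^ i` (so `α i` is the `α_{i+1}` of the paper). -/
def binWeight (α : ℕ →₀ ℕ) : ℕ := α.sum fun i a => a * 2 ^ i

/-- `r0 n` is the number of binary partitions of `n` with an even number of
parts equal to `1`, i.e. with `2 ∣ α₁` (here `2 ∣ α 0`). -/
noncomputable def r0 (n : ℕ) : ℕ :=
  Nat.card {α : ℕ →₀ ℕ | binWeight α = n ∧ 2 ∣ α 0}

open Finsupp

def binaryPartitions (n : ℕ) : Set (ℕ →₀ ℕ) := {α | binWeight α = n}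

@[simp] lemma mem_binaryPartitions {α : ℕ →₀ ℕ} {n : ℕ} :
    α ∈ binaryPartitions n ↔ binWeight α = n := Iff.rfl

@[simp] lemma binWeight_zero : binWeight 0 = 0 := sum_zero_index

lemma binWeight_add (α β : ℕ →₀ ℕ) : binWeight (α + β) = binWeight α + binWeight β :=
  sum_add_index' (fun _ => zero_mul _) fun _ _ _ => add_mul _ _ _

lemma binWeight_single (i a : ℕ) : binWeight (single i a) = a * 2 ^ i :=
  sum_single_index (zero_mul _)

lemma binWeight_embDomain_succ (β : ℕ →₀ ℕ) :
    binWeight (embDomain (addRightEmbedding 1) β) = 2 * binWeight β := by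
  simp only [binWeight, sum_embDomain, mul_sum, addRightEmbedding_apply, pow_succ]
  exact sum_congr fun _ _ => by ring

lemma apply_mul_two_pow_le_binWeight (α : ℕ →₀ ℕ) (i : ℕ) : α i * 2 ^ i ≤ binWeight α := by
  by_cases hi : i ∈ α.support
  · exact Finset.single_le_sum (f := fun j => α j * 2 ^ j) (fun _ _ => Nat.zero_le _) hi
  · simp [notMem_support_iff.mp hi]

lemma binWeight_eq_apply_zero_add_erase (α : ℕ →₀ ℕ) :
    binWeight α = α 0 + binWeight (α.erase 0) := by
  conv_lhs => rw [← single_add_erase 0 α]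
  rw [binWeight_add, binWeight_single, pow_zero, mul_one]

lemma two_dvd_binWeight_erase_zero (α : ℕ →₀ ℕ) : 2 ∣ binWeight (α.erase 0) := by
  refine Finset.dvd_sum fun i hi => Dvd.dvd.mul_left (dvd_pow_self 2 ?_) _
  rw [support_erase] at hi
  exact Finset.ne_of_mem_erase hi

lemma binWeight_mod_two (α : ℕ →₀ ℕ) : binWeight α % 2 = α 0 % 2 := by
  have := two_dvd_binWeight_erase_zero α
  rw [binWeight_eq_apply_zero_add_erase]
  omega

lemma binaryPartitions_finite (n : ℕ) : (binaryPartitions n).Finite := by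
  refine (Set.finite_Iic (∑ i ∈ Finset.range (n + 1), single i n)).subset fun α hα => ?_
  intro i
  have hle := apply_mul_two_pow_le_binWeight α i
  rw [mem_binaryPartitions.mp hα] at hle
  simp only [finsetSum_apply, single_apply, Finset.sum_ite_eq', Finset.mem_range]
  split_ifs with hi
  · exact le_trans (Nat.le_mul_of_pos_right _ (by positivity)) hle
  · have : n < 2 ^ i := lt_of_lt_of_le (by omega) (Nat.lt_two_pow_self).le
    nlinarith

lemma image_add_single_zero (n k : ℕ) :
    (· + single 0 k) '' binaryPartitions n = {α ∈ binaryPartitions (n + k) | k ≤ α 0} := by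
  ext α
  constructor
  · rintro ⟨β, hβ, rfl⟩
    simp_all [binWeight_add, binWeight_single]
  · rintro ⟨hα, hk⟩
    have hcancel : α - single 0 k + single 0 k = α := tsub_add_cancel_of_le (single_le_iff.mpr hk)
    refine ⟨α - single 0 k, ?_, hcancel⟩
    have := congrArg binWeight hcancel
    rw [binWeight_add, binWeight_single, mem_binaryPartitions.mp hα] at this
    simp only [mem_binaryPartitions]
    omega

lemma image_embDomain_succ (n : ℕ) :
    embDomain (addRightEmbedding 1) '' binaryPartitions n =
      {α ∈ binaryPartitions (2 * n) | α 0 = 0} := by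
  ext α
  constructor
  · rintro ⟨β, hβ, rfl⟩
    refine ⟨by simp_all [binWeight_embDomain_succ], embDomain_of_notMem_range _ _ _ ?_⟩
    simp
  · rintro ⟨hα, h0⟩
    have hsupp : ↑α.support ⊆ Set.range (addRightEmbedding 1) := fun i hi =>
      ⟨i - 1, by
        have : i ≠ 0 := fun h => mem_support_iff.mp hi (h ▸ h0)
        simp only [addRightEmbedding_apply]
        omega⟩
    obtain ⟨β, rfl⟩ := (mem_range_embDomain_iff _ α).mpr hsupp
    refine ⟨β, ?_, rfl⟩
    rw [mem_binaryPartitions, binWeight_embDomain_succ] at hα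
    simp only [mem_binaryPartitions]
    omega

lemma ncard_binaryPartitions_two_mul_add_one (n : ℕ) :
    (binaryPartitions (2 * n + 1)).ncard = (binaryPartitions (2 * n)).ncard := by
  have hsplit : binaryPartitions (2 * n + 1) = {α ∈ binaryPartitions (2 * n + 1) | 1 ≤ α 0} := by
    ext α
    have := binWeight_mod_two α
    simp only [mem_binaryPartitions, Set.mem_ofPred_eq]
    omega
  rw [hsplit, ← image_add_single_zero, Set.ncard_image_of_injective _ (add_left_injective _)]

lemma ncard_binaryPartitions_two_mul_add_two (n : ℕ) :
    (binaryPartitions (2 * n + 2)).ncard =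
      (binaryPartitions (2 * n)).ncard + (binaryPartitions (n + 1)).ncard := by
  have hsplit : binaryPartitions (2 * n + 2) =
      {α ∈ binaryPartitions (2 * n + 2) | 2 ≤ α 0} ∪
        {α ∈ binaryPartitions (2 * (n + 1)) | α 0 = 0} := by
    ext α
    have := binWeight_mod_two α
    simp only [mem_binaryPartitions, Set.mem_union, Set.mem_ofPred_eq]
    omega
  have hdisj : Disjoint {α ∈ binaryPartitions (2 * n + 2) | 2 ≤ α 0}
      {α ∈ binaryPartitions (2 * (n + 1)) | α 0 = 0} :=
    Set.disjoint_left.mpr fun _ ⟨_, h⟩ ⟨_, h'⟩ => by omega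
  rw [hsplit, Set.ncard_union_eq hdisj ((binaryPartitions_finite _).sep _)
    ((binaryPartitions_finite _).sep _), ← image_add_single_zero, ← image_embDomain_succ,
    Set.ncard_image_of_injective _ (add_left_injective _),
    Set.ncard_image_of_injective _ (embDomain_injective _)]

lemma r0_eq_zero_of_odd {n : ℕ} (hn : Odd n) : r0 n = 0 := by
  rw [r0, Nat.card_eq_zero]
  left
  refine ⟨fun ⟨α, hw, hα⟩ => ?_⟩
  have := binWeight_mod_two α
  obtain ⟨k, rfl⟩ := hn
  omega

lemma r0_two_mul (n : ℕ) : r0 (2 * n) = (binaryPartitions (2 * n)).ncard := by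
  rw [r0, Nat.card_coe_set_eq]
  congr 1
  ext α
  have := binWeight_mod_two α
  simp only [mem_binaryPartitions, Set.mem_ofPred_eq]
  omega

lemma ncard_binaryPartitions (m : ℕ) : (binaryPartitions m).ncard = r0 (2 * (m / 2)) := by
  rw [r0_two_mul]
  rcases Nat.even_or_odd' m with ⟨k, rfl | rfl⟩
  · simp
  · rw [ncard_binaryPartitions_two_mul_add_one]
    congr 2
    omega

lemma r0_two_mul_add_two (m : ℕ) : r0 (2 * m + 2) = r0 (2 * m) + r0 (2 * ((m + 1) / 2)) := by
  rw [← ncard_binaryPartitions, r0_two_mul, ← ncard_binaryPartitions_two_mul_add_two,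
    show 2 * m + 2 = 2 * (m + 1) by ring, r0_two_mul]

lemma binaryPartitions_zero : binaryPartitions 0 = {0} := by
  ext α
  refine ⟨fun hα => ?_, fun hα => by simp_all⟩
  ext i
  have := apply_mul_two_pow_le_binWeight α i
  simp_all

lemma r0_zero : r0 0 = 1 := by
  simpa [binaryPartitions_zero] using r0_two_mul 0

theorem stmt16 :
    r0 0 = 1 ∧
    (∀ n : ℕ, 2 ≤ n →
      (n % 4 = 2 → r0 n = r0 (n - 2) + r0 ((n - 2) / 2)) ∧
      (n % 4 = 0 → r0 n = r0 (n - 2) + r0 (n / 2))) ∧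
    ∀ n : ℕ, Odd n → r0 n = 0 := by
  refine ⟨r0_zero, fun n hn => ⟨fun h4 => ?_, fun h4 => ?_⟩, fun n => r0_eq_zero_of_odd⟩
  all_goals
    obtain ⟨m, rfl⟩ : ∃ m, n = 2 * m + 2 := ⟨n / 2 - 1, by omega⟩
    rw [r0_two_mul_add_two]
    congr 2
    all_goals omega
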